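/- arXiv:0803.2552 — 4 statements merged into one kernel-verified Lean document; each statement's English description precedes it below -/
import Mathlib

section
/- Let ε ∈ (0,2) and f ∈ L²(0,π). Define h(θ) = -(cot(θ/2))^{1/ε} ∫₀^θ f(t)(tan(t/2))^{1/ε} dt + ∫₀^θ f(t) dt for θ ∈ (0,π). Then h ∈ L²(0,π). -/
open MeasureTheory Set Real

/-!
Since `t ↦ tan (t/2) ^ (1/ε)` is nonnegative and increasing on `[0, π)`, the weighted term obeys
`cot (θ/2) ^ (1/ε) * |∫₀^θ f(t) tan (t/2) ^ (1/ε) dt| ≤ ∫₀^θ |f|`, so `h` is bounded by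
`2 ‖f‖_{L¹(0,π)}`. Being also continuous on `(0, π)`, it lies in every `Lᵖ(0, π)`.
-/

lemma continuousOn_setIntegral_Ioo_primitive {u : ℝ → ℝ} {a c : ℝ}
    (hu : ∀ b < c, IntegrableOn u (Icc a b)) :
    ContinuousOn (fun x => ∫ t in Ioo a x, u t) (Ioo a c) := by
  intro θ hθ
  have hb : θ < (θ + c) / 2 := by linarith [hθ.2]
  have hprim := intervalIntegral.continuousOn_primitive (hu ((θ + c) / 2) (by linarith [hθ.2]))
  simp_rw [← integral_Ioc_eq_integral_Ioo]
  exact (hprim.continuousAt (Icc_mem_nhds hθ.1 hb)).continuousWithinAt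

lemma abs_setIntegral_mul_le_of_monotoneOn {f w : ℝ → ℝ} {a b : ℝ}
    (hw : MonotoneOn w (Icc a b)) (hw0 : ∀ t ∈ Ioo a b, 0 ≤ w t)
    (hf : IntegrableOn f (Ioo a b)) :
    |∫ t in Ioo a b, f t * w t| ≤ w b * ∫ t in Ioo a b, |f t| := by
  rw [← integral_const_mul, ← Real.norm_eq_abs]
  refine norm_integral_le_of_norm_le (hf.abs.const_mul _) ?_
  filter_upwards [self_mem_ae_restrict measurableSet_Ioo] with t ht
  have hwt : w t ≤ w b :=
    hw (Ioo_subset_Icc_self ht) ⟨(ht.1.trans ht.2).le, le_rfl⟩ ht.2.le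
  rw [norm_mul, Real.norm_eq_abs, Real.norm_of_nonneg (hw0 t ht), mul_comm]
  exact mul_le_mul_of_nonneg_right hwt (abs_nonneg _)

lemma abs_neg_inv_mul_setIntegral_mul_add_setIntegral_le {f w : ℝ → ℝ} {a b : ℝ}
    (hw : MonotoneOn w (Icc a b)) (hw0 : ∀ t ∈ Ioo a b, 0 ≤ w t)
    (hf : IntegrableOn f (Ioo a b)) :
    |-(w b)⁻¹ * (∫ t in Ioo a b, f t * w t) + ∫ t in Ioo a b, f t|
      ≤ 2 * ∫ t in Ioo a b, |f t| := by
  have hI : 0 ≤ ∫ t in Ioo a b, |f t| :=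
    setIntegral_nonneg measurableSet_Ioo fun _ _ => abs_nonneg _
  have hweighted : |-(w b)⁻¹ * ∫ t in Ioo a b, f t * w t| ≤ ∫ t in Ioo a b, |f t| :=
    calc |-(w b)⁻¹ * ∫ t in Ioo a b, f t * w t|
        = |w b|⁻¹ * |∫ t in Ioo a b, f t * w t| := by rw [abs_mul, abs_neg, abs_inv]
      _ ≤ |w b|⁻¹ * (w b * ∫ t in Ioo a b, |f t|) := by
          gcongr; exact abs_setIntegral_mul_le_of_monotoneOn hw hw0 hf
      _ ≤ ∫ t in Ioo a b, |f t| := by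
          rw [← mul_assoc]
          exact mul_le_of_le_one_left hI (inv_mul_le_one_of_le₀ (le_abs_self _) (abs_nonneg _))
  have hplain : |∫ t in Ioo a b, f t| ≤ ∫ t in Ioo a b, |f t| := abs_integral_le_integral_abs
  calc _ ≤ _ := abs_add_le _ _
    _ ≤ 2 * ∫ t in Ioo a b, |f t| := by linarith

lemma tan_half_nonneg {t : ℝ} (h0 : 0 ≤ t) (hπ : t ≤ π) : 0 ≤ tan (t / 2) :=
  tan_nonneg_of_nonneg_of_le_pi_div_two (by linarith) (by linarith)

lemma tan_half_rpow_pos {t : ℝ} (p : ℝ) (ht : t ∈ Ioo 0 π) : 0 < tan (t / 2) ^ p :=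
  rpow_pos_of_pos (tan_pos_of_pos_of_lt_pi_div_two (by linarith [ht.1]) (by linarith [ht.2])) _

lemma monotoneOn_tan_half_rpow {p : ℝ} (hp : 0 ≤ p) :
    MonotoneOn (fun t => tan (t / 2) ^ p) (Ico 0 π) := by
  intro s hs t ht hst
  have hmem : ∀ x ∈ Ico 0 π, x / 2 ∈ Ioo (-(π / 2)) (π / 2) := fun x hx =>
    ⟨by linarith [hx.1, pi_pos], by linarith [hx.2]⟩
  exact rpow_le_rpow (tan_half_nonneg hs.1 hs.2.le)
    (strictMonoOn_tan.monotoneOn (hmem s hs) (hmem t ht) (by linarith)) hp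

lemma continuousOn_tan_half_rpow {p : ℝ} (hp : 0 ≤ p) :
    ContinuousOn (fun t => tan (t / 2) ^ p) (Ioo (-π) π) := by
  intro t ht
  have hcos : cos (t / 2) ≠ 0 :=
    (cos_pos_of_mem_Ioo ⟨by linarith [ht.1], by linarith [ht.2]⟩).ne'
  exact ((continuousAt_tan.mpr hcos).comp (f := fun x : ℝ => x / 2)
    (continuous_id.div_const 2).continuousAt |>.rpow_const (Or.inr hp)).continuousWithinAt

noncomputable def tanHalfTransform (p : ℝ) (f : ℝ → ℝ) (θ : ℝ) : ℝ :=
  -(tan (θ / 2) ^ p)⁻¹ * (∫ t in Ioo 0 θ, f t * tan (t / 2) ^ p) + ∫ t in Ioo 0 θ, f t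

section tanHalfTransform

variable {p : ℝ} {f : ℝ → ℝ}

lemma continuousOn_tanHalfTransform (hp : 0 ≤ p) (hf : IntegrableOn f (Ioo 0 π)) :
    ContinuousOn (tanHalfTransform p f) (Ioo 0 π) := by
  have hf_Icc : ∀ b < π, IntegrableOn f (Icc 0 b) := fun b hb =>
    (integrableOn_Icc_iff_integrableOn_Ioo).mpr (hf.mono_set (Ioo_subset_Ioo_right hb.le))
  have hfw_Icc : ∀ b < π, IntegrableOn (fun t => f t * tan (t / 2) ^ p) (Icc 0 b) :=
    fun b hb => (hf_Icc b hb).mul_continuousOn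
      ((continuousOn_tan_half_rpow hp).mono (Icc_subset_Ioo (by linarith [pi_pos]) hb))
      isCompact_Icc
  have hw : ContinuousOn (fun θ => tan (θ / 2) ^ p) (Ioo 0 π) :=
    (continuousOn_tan_half_rpow hp).mono (Ioo_subset_Ioo_left (by linarith [pi_pos]))
  exact ((hw.inv₀ fun θ hθ => (tan_half_rpow_pos p hθ).ne').neg.mul
    (continuousOn_setIntegral_Ioo_primitive hfw_Icc)).add
    (continuousOn_setIntegral_Ioo_primitive hf_Icc)

lemma abs_tanHalfTransform_le (hp : 0 ≤ p) (hf : IntegrableOn f (Ioo 0 π)) {θ : ℝ}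
    (hθ : θ ∈ Ioo 0 π) : |tanHalfTransform p f θ| ≤ 2 * ∫ t in Ioo 0 π, |f t| :=
  calc |tanHalfTransform p f θ| ≤ 2 * ∫ t in Ioo 0 θ, |f t| :=
        abs_neg_inv_mul_setIntegral_mul_add_setIntegral_le
          ((monotoneOn_tan_half_rpow hp).mono (Icc_subset_Ico_right hθ.2))
          (fun _ ht => (tan_half_rpow_pos p ⟨ht.1, ht.2.trans hθ.2⟩).le)
          (hf.mono_set (Ioo_subset_Ioo_right hθ.2.le))
    _ ≤ 2 * ∫ t in Ioo 0 π, |f t| :=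
        mul_le_mul_of_nonneg_left (setIntegral_mono_set hf.abs
          (ae_of_all _ fun _ => abs_nonneg _) (Ioo_subset_Ioo_right hθ.2.le).eventuallyLE)
          zero_le_two

lemma memLp_tanHalfTransform (hp : 0 ≤ p) (hf : IntegrableOn f (Ioo 0 π)) (q : ENNReal) :
    MemLp (tanHalfTransform p f) q (volume.restrict (Ioo 0 π)) := by
  refine MemLp.of_bound ((continuousOn_tanHalfTransform hp hf).aestronglyMeasurable
    measurableSet_Ioo) (2 * ∫ t in Ioo 0 π, |f t|) ?_
  filter_upwards [self_mem_ae_restrict measurableSet_Ioo] with θ hθ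
  exact abs_tanHalfTransform_le hp hf hθ

end tanHalfTransform

/-- For `ε ∈ (0,2)` and `f ∈ L²(0,π)`, the function
`h(θ) = -(cot(θ/2))^(1/ε) ∫₀^θ f(t) (tan(t/2))^(1/ε) dt + ∫₀^θ f(t) dt`
belongs to `L²(0,π)`. -/
theorem stmt1 (ε : ℝ) (hε : ε ∈ Set.Ioo (0:ℝ) 2)
    (f : ℝ → ℝ) (hf : MemLp f 2 (volume.restrict (Ioo 0 π)))
    (h : ℝ → ℝ)
    (hh : ∀ θ ∈ Ioo (0:ℝ) π,
      h θ = -((Real.tan (θ/2))⁻¹ ^ (1/ε)) * (∫ t in Ioo 0 θ, f t * (Real.tan (t/2)) ^ (1/ε))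
            + ∫ t in Ioo 0 θ, f t) :
    MemLp h 2 (volume.restrict (Ioo 0 π)) := by
  have hp : 0 ≤ 1 / ε := one_div_nonneg.mpr hε.1.le
  refine (memLp_tanHalfTransform hp (hf.integrable one_le_two) 2).ae_eq ?_
  refine (ae_restrict_iff' measurableSet_Ioo).mpr (ae_of_all _ fun θ hθ => ?_)
  rw [hh θ hθ, tanHalfTransform, inv_rpow (tan_half_nonneg hθ.1.le hθ.2.le)]
end

section
/- Let ε ∈ (0,2) and f ∈ L²(0,π). Define h'(θ) = -(1/(ε sin θ)) (cot(θ/2))^{1/ε} ∫₀^θ f(t)(tan(t/2))^{1/ε} dt for θ ∈ (0,δ) with δ small. Then h' ∈ L²(0,δ) and ‖h'‖_{L²(0,δ)} ≤ K ‖f‖_{L²(0,π)} for a constant K depending only on ε and δ. -/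
open MeasureTheory Set Real
open scoped ENNReal

/-!
With `p = 1/ε`, the bounds `sin θ ≥ 2θ/π`, `tan (θ/2) ≥ θ/2` and `tan (t/2) ≤ t` (for `t ≤ 2π/3`)
dominate `|h'(θ)|` by a constant times the weighted Hardy operator
`θ^(-1-p) ∫₀^θ |f t| t^p dt`. For every `p > -1/2` this operator is bounded on `L²(0,δ)` with norm
at most `(p + 1/2)⁻¹`: Cauchy–Schwarz with the splitting `t^p = t^(p/2+1/4) t^(p/2-1/4)` gives
`(∫₀^θ F t^p)² ≤ θ^(p+1/2)/(p+1/2) · ∫₀^θ F² t^(p+1/2)`, and after exchanging the order of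
integration the remaining weight is `∫_t^∞ θ^(-3/2-p) dθ = t^(-1/2-p)/(p+1/2)`.
-/

theorem sq_eLpNorm_two {α E : Type*} [MeasurableSpace α] [ENorm E] {μ : Measure α}
    (f : α → E) : eLpNorm f 2 μ ^ 2 = ∫⁻ x, ‖f x‖ₑ ^ 2 ∂μ := by
  simpa using eLpNorm_nnreal_pow_eq_lintegral (f := f) (μ := μ) (p := 2) two_ne_zero

theorem ENNReal.sq_lintegral_mul_le {α : Type*} [MeasurableSpace α] {μ : Measure α}
    {f g : α → ℝ≥0∞} (hf : AEMeasurable f μ) (hg : AEMeasurable g μ) :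
    (∫⁻ a, f a * g a ∂μ) ^ 2 ≤ (∫⁻ a, f a ^ 2 ∂μ) * ∫⁻ a, g a ^ 2 ∂μ := by
  have h := ENNReal.lintegral_mul_le_Lp_mul_Lq μ Real.HolderConjugate.two_two hf hg
  simp only [Pi.mul_apply, ← ENNReal.rpow_natCast] at h ⊢
  calc (∫⁻ a, f a * g a ∂μ) ^ ((2 : ℕ) : ℝ)
      ≤ ((∫⁻ a, f a ^ (2 : ℝ) ∂μ) ^ (1 / 2 : ℝ) * (∫⁻ a, g a ^ (2 : ℝ) ∂μ) ^ (1 / 2 : ℝ))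
          ^ ((2 : ℕ) : ℝ) := by gcongr
    _ = _ := by
      rw [ENNReal.mul_rpow_of_nonneg _ _ (by norm_num), ← ENNReal.rpow_mul, ← ENNReal.rpow_mul]
      norm_num

theorem lintegral_Ioo_rpow {r θ : ℝ} (hr : -1 < r) (hθ : 0 ≤ θ) :
    ∫⁻ t in Ioo 0 θ, ENNReal.ofReal (t ^ r) = ENNReal.ofReal (θ ^ (r + 1) / (r + 1)) := by
  rw [← ofReal_integral_eq_lintegral_ofReal, Measure.restrict_congr_set Ioo_ae_eq_Ioc,
    ← intervalIntegral.integral_of_le hθ, integral_rpow (Or.inl hr),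
    Real.zero_rpow (by linarith), sub_zero]
  · exact (intervalIntegral.intervalIntegrable_rpow' hr).1.mono_set Ioo_subset_Ioc_self
  · filter_upwards [ae_restrict_mem measurableSet_Ioo] with t ht
    exact Real.rpow_nonneg ht.1.le _

theorem lintegral_Ioi_rpow_of_lt {r t : ℝ} (hr : r < -1) (ht : 0 < t) :
    ∫⁻ θ in Ioi t, ENNReal.ofReal (θ ^ r) = ENNReal.ofReal (-t ^ (r + 1) / (r + 1)) := by
  rw [← integral_Ioi_rpow_of_lt hr ht, ofReal_integral_eq_lintegral_ofReal
    (integrableOn_Ioi_rpow_of_lt hr ht)]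
  filter_upwards [ae_restrict_mem measurableSet_Ioi] with θ hθ
  exact Real.rpow_nonneg (ht.trans hθ).le _

theorem ofReal_rpow_sq {t : ℝ} (ht : 0 ≤ t) (r : ℝ) :
    ENNReal.ofReal (t ^ r) ^ 2 = ENNReal.ofReal (t ^ (2 * r)) := by
  rw [← ENNReal.ofReal_pow (Real.rpow_nonneg ht _), ← Real.rpow_mul_natCast ht]
  ring_nf

theorem ofReal_rpow_mul_ofReal_rpow {t : ℝ} (ht : 0 < t) (a b : ℝ) :
    ENNReal.ofReal (t ^ a) * ENNReal.ofReal (t ^ b) = ENNReal.ofReal (t ^ (a + b)) := by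
  rw [← ENNReal.ofReal_mul (Real.rpow_nonneg ht.le _), Real.rpow_add ht]

theorem sq_lintegral_Ioo_mul_rpow_le {p θ : ℝ} (hp : -1 / 2 < p) (hθ : 0 ≤ θ) {F : ℝ → ℝ≥0∞}
    (hF : AEMeasurable F (volume.restrict (Ioo 0 θ))) :
    (∫⁻ t in Ioo 0 θ, F t * ENNReal.ofReal (t ^ p)) ^ 2 ≤
      ENNReal.ofReal (θ ^ (p + 1 / 2) / (p + 1 / 2)) *
        ∫⁻ t in Ioo 0 θ, F t ^ 2 * ENNReal.ofReal (t ^ (p + 1 / 2)) := by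
  have split : ∀ t ∈ Ioo 0 θ, F t * ENNReal.ofReal (t ^ p) =
      F t * ENNReal.ofReal (t ^ (p / 2 + 1 / 4)) * ENNReal.ofReal (t ^ (p / 2 - 1 / 4)) := by
    intro t ht
    rw [mul_assoc, ← ENNReal.ofReal_mul (Real.rpow_nonneg ht.1.le _), ← Real.rpow_add ht.1]
    ring_nf
  have sq_left : ∀ t ∈ Ioo 0 θ, (F t * ENNReal.ofReal (t ^ (p / 2 + 1 / 4))) ^ 2 =
      F t ^ 2 * ENNReal.ofReal (t ^ (p + 1 / 2)) := by
    intro t ht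
    rw [mul_pow, ofReal_rpow_sq ht.1.le]
    ring_nf
  have sq_right : ∀ t ∈ Ioo 0 θ, ENNReal.ofReal (t ^ (p / 2 - 1 / 4)) ^ 2 =
      ENNReal.ofReal (t ^ (p - 1 / 2)) := by
    intro t ht
    rw [ofReal_rpow_sq ht.1.le]
    ring_nf
  rw [setLIntegral_congr_fun measurableSet_Ioo split, mul_comm,
    ← setLIntegral_congr_fun measurableSet_Ioo sq_left]
  convert ENNReal.sq_lintegral_mul_le (f := fun t => F t * ENNReal.ofReal (t ^ (p / 2 + 1 / 4)))
    (g := fun t => ENNReal.ofReal (t ^ (p / 2 - 1 / 4))) (by fun_prop) (by fun_prop) using 2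
  rw [setLIntegral_congr_fun measurableSet_Ioo sq_right, lintegral_Ioo_rpow (by linarith) hθ]
  ring_nf

theorem lintegral_Ioo_mul_lintegral_Ioo_comm {a b : ℝ} {w G : ℝ → ℝ≥0∞} (hw : Measurable w)
    (hG : AEMeasurable G (volume.restrict (Ioo a b))) :
    ∫⁻ θ in Ioo a b, w θ * ∫⁻ t in Ioo a θ, G t =
      ∫⁻ t in Ioo a b, G t * ∫⁻ θ in Ioo t b, w θ := by
  set K : ℝ × ℝ → ℝ≥0∞ := {q | q.2 < q.1}.indicator fun q => w q.1 * G q.2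
  have hK : AEMeasurable K ((volume.restrict (Ioo a b)).prod (volume.restrict (Ioo a b))) :=
    ((hw.aemeasurable.comp_fst).mul hG.comp_snd).indicator
      (measurableSet_lt measurable_snd measurable_fst)
  have inner_t : ∀ θ ∈ Ioo a b, w θ * ∫⁻ t in Ioo a θ, G t = ∫⁻ t in Ioo a b, K (θ, t) := by
    intro θ hθ
    have hKθ : (fun t => K (θ, t)) = (Iio θ).indicator fun t => w θ * G t := rfl
    rw [hKθ, lintegral_indicator measurableSet_Iio, Measure.restrict_restrict measurableSet_Iio,
      Iio_inter_Ioo, min_eq_left hθ.2.le]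
    exact (lintegral_const_mul'' _ (hG.mono_measure (Measure.restrict_mono
      (Ioo_subset_Ioo_right hθ.2.le) le_rfl))).symm
  have inner_θ : ∀ t ∈ Ioo a b, G t * ∫⁻ θ in Ioo t b, w θ = ∫⁻ θ in Ioo a b, K (θ, t) := by
    intro t ht
    have hKt : (fun θ => K (θ, t)) = (Ioi t).indicator fun θ => w θ * G t := rfl
    rw [hKt, lintegral_indicator measurableSet_Ioi, Measure.restrict_restrict measurableSet_Ioi,
      Ioi_inter_Ioo, max_eq_left ht.1.le, lintegral_mul_const _ hw, mul_comm]
  rw [setLIntegral_congr_fun measurableSet_Ioo inner_t,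
    setLIntegral_congr_fun measurableSet_Ioo inner_θ]
  exact lintegral_lintegral_swap (f := fun θ t => K (θ, t)) hK

noncomputable def hardyOp (p : ℝ) (F : ℝ → ℝ≥0∞) (θ : ℝ) : ℝ≥0∞ :=
  ENNReal.ofReal (θ ^ (-1 - p)) * ∫⁻ t in Ioo 0 θ, F t * ENNReal.ofReal (t ^ p)

theorem lintegral_Ioo_hardy {p δ : ℝ} (hp : -1 / 2 < p) {F : ℝ → ℝ≥0∞}
    (hF : AEMeasurable F (volume.restrict (Ioo 0 δ))) :
    ∫⁻ θ in Ioo 0 δ, hardyOp p F θ ^ 2 ≤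
      ENNReal.ofReal ((p + 1 / 2)⁻¹) ^ 2 * ∫⁻ t in Ioo 0 δ, F t ^ 2 := by
  set c := ENNReal.ofReal ((p + 1 / 2)⁻¹)
  have cauchy_schwarz : ∀ θ ∈ Ioo 0 δ, hardyOp p F θ ^ 2 ≤
      c * (ENNReal.ofReal (θ ^ (-3 / 2 - p)) *
        ∫⁻ t in Ioo 0 θ, F t ^ 2 * ENNReal.ofReal (t ^ (p + 1 / 2))) := by
    intro θ hθ
    have hFθ := hF.mono_measure (Measure.restrict_mono (Ioo_subset_Ioo_right hθ.2.le) le_rfl)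
    have weight : ENNReal.ofReal (θ ^ (-1 - p)) ^ 2 *
        ENNReal.ofReal (θ ^ (p + 1 / 2) / (p + 1 / 2)) = c * ENNReal.ofReal (θ ^ (-3 / 2 - p)) := by
      have exponents : θ ^ (-1 - p) * θ ^ (-1 - p) * θ ^ (p + 1 / 2) = θ ^ (-3 / 2 - p) := by
        rw [← rpow_add hθ.1, ← rpow_add hθ.1]; ring_nf
      have hθ' := rpow_nonneg hθ.1.le (-1 - p)
      rw [sq, ← ENNReal.ofReal_mul hθ', ← ENNReal.ofReal_mul (mul_nonneg hθ' hθ'),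
        ← ENNReal.ofReal_mul (inv_nonneg.2 (by linarith)), ← exponents]
      ring_nf
    grw [hardyOp, mul_pow, sq_lintegral_Ioo_mul_rpow_le hp hθ.1.le hFθ, ← mul_assoc, weight,
      mul_assoc]
  have tail : ∀ t ∈ Ioo 0 δ,
      F t ^ 2 * ENNReal.ofReal (t ^ (p + 1 / 2)) *
        ∫⁻ θ in Ioo t δ, ENNReal.ofReal (θ ^ (-3 / 2 - p)) ≤ c * F t ^ 2 := by
    intro t ht
    have exponents : t ^ (p + 1 / 2) * t ^ (-3 / 2 - p + 1) = 1 := by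
      rw [← rpow_add ht.1]; ring_nf; exact rpow_zero t
    have tail_value : ENNReal.ofReal (t ^ (p + 1 / 2)) *
        ENNReal.ofReal (-t ^ (-3 / 2 - p + 1) / (-3 / 2 - p + 1)) = c := by
      rw [← ENNReal.ofReal_mul (rpow_nonneg ht.1.le _), mul_div_assoc', mul_neg, exponents,
        show (-3 / 2 - p + 1 : ℝ) = -(p + 1 / 2) by ring, neg_div_neg_eq, one_div]
    grw [lintegral_mono_set Ioo_subset_Ioi_self, lintegral_Ioi_rpow_of_lt (by linarith) ht.1,
      mul_assoc, tail_value, mul_comm]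
  calc _ ≤ ∫⁻ θ in Ioo 0 δ, c * (ENNReal.ofReal (θ ^ (-3 / 2 - p)) *
          ∫⁻ t in Ioo 0 θ, F t ^ 2 * ENNReal.ofReal (t ^ (p + 1 / 2))) :=
        setLIntegral_mono' measurableSet_Ioo cauchy_schwarz
    _ = c * ∫⁻ t in Ioo 0 δ, F t ^ 2 * ENNReal.ofReal (t ^ (p + 1 / 2)) *
          ∫⁻ θ in Ioo t δ, ENNReal.ofReal (θ ^ (-3 / 2 - p)) := by
        rw [lintegral_const_mul' _ _ ENNReal.ofReal_ne_top,
          lintegral_Ioo_mul_lintegral_Ioo_comm (by fun_prop) (by fun_prop)]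
    _ ≤ c * ∫⁻ t in Ioo 0 δ, c * F t ^ 2 := by grw [setLIntegral_mono' measurableSet_Ioo tail]
    _ = c ^ 2 * ∫⁻ t in Ioo 0 δ, F t ^ 2 := by
        rw [lintegral_const_mul' _ _ ENNReal.ofReal_ne_top, ← mul_assoc, sq]

theorem aestronglyMeasurable_setIntegral_Ioo {E : Type*} [NormedAddCommGroup E] [NormedSpace ℝ E]
    {a b : ℝ} {g : ℝ → E} (hg : AEStronglyMeasurable g (volume.restrict (Ioo a b))) :
    AEStronglyMeasurable (fun θ => ∫ t in Ioo a θ, g t) (volume.restrict (Iic b)) := by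
  set G : ℝ × ℝ → E := {q | q.2 < q.1}.indicator fun q => g q.2
  have hG : AEStronglyMeasurable G ((volume.restrict (Iic b)).prod (volume.restrict (Ioo a b))) :=
    hg.comp_snd.indicator (measurableSet_lt measurable_snd measurable_fst)
  refine hG.integral_prod_right'.congr ((ae_restrict_iff' measurableSet_Iic).2 (ae_of_all _ ?_))
  intro θ hθ
  have hGθ : (fun t => G (θ, t)) = (Iio θ).indicator g := rfl
  show ∫ t in Ioo a b, G (θ, t) = _
  rw [hGθ, integral_indicator measurableSet_Iio, Measure.restrict_restrict measurableSet_Iio,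
    Iio_inter_Ioo, min_eq_left hθ]

@[fun_prop]
theorem Real.measurable_tan : Measurable Real.tan := by
  rw [show Real.tan = fun x => sin x / cos x from funext tan_eq_sin_div_cos]
  fun_prop

theorem tan_half_le_self {t : ℝ} (h0 : 0 ≤ t) (ht : t ≤ 2 * π / 3) : tan (t / 2) ≤ t := by
  have hcos : 1 / 2 ≤ cos (t / 2) := by
    rw [← cos_pi_div_three]
    exact cos_le_cos_of_nonneg_of_le_pi (by linarith) (by linarith [pi_pos]) (by linarith)
  rw [tan_eq_sin_div_cos, div_le_iff₀ (by linarith)]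
  nlinarith [sin_le (show 0 ≤ t / 2 by linarith)]

theorem abs_inv_sin_mul_cot_half_rpow_le {ε θ : ℝ} (hε : 0 < ε) (hθ : 0 < θ) (hθ' : θ ≤ π / 2) :
    |-(1 / (ε * sin θ)) * (tan (θ / 2))⁻¹ ^ (1 / ε)| ≤
      π / (2 * ε) * 2 ^ (1 / ε) * θ ^ (-1 - 1 / ε) := by
  have jordan : 2 / π * θ ≤ sin θ := mul_le_sin hθ.le hθ'
  have htan : θ / 2 ≤ tan (θ / 2) := le_tan (by linarith) (by linarith)
  have hsin : 0 < sin θ := lt_of_lt_of_le (by positivity) jordan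
  have htan0 : 0 < tan (θ / 2) := lt_of_lt_of_le (by positivity) htan
  rw [abs_mul, abs_neg, abs_of_pos (by positivity), abs_of_nonneg (by positivity)]
  calc 1 / (ε * sin θ) * (tan (θ / 2))⁻¹ ^ (1 / ε)
      ≤ 1 / (ε * (2 / π * θ)) * (θ / 2)⁻¹ ^ (1 / ε) := by gcongr
    _ = π / (2 * ε) * 2 ^ (1 / ε) * θ ^ (-1 - 1 / ε) := by
      rw [inv_div, div_rpow zero_le_two hθ.le, sub_eq_add_neg, rpow_add hθ, rpow_neg_one,
        rpow_neg hθ.le]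
      field_simp

theorem enorm_integral_mul_tan_half_rpow_le {p θ : ℝ} (hp : 0 ≤ p) (hθ : θ ≤ 2 * π / 3)
    (f : ℝ → ℝ) :
    ‖∫ t in Ioo 0 θ, f t * tan (t / 2) ^ p‖ₑ ≤
      ∫⁻ t in Ioo 0 θ, ‖f t‖ₑ * ENNReal.ofReal (t ^ p) := by
  refine (enorm_integral_le_lintegral_enorm _).trans (setLIntegral_mono' measurableSet_Ioo ?_)
  intro t ht
  have htan : 0 ≤ tan (t / 2) :=
    tan_nonneg_of_nonneg_of_le_pi_div_two (by linarith [ht.1]) (by linarith [ht.2, pi_pos])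
  rw [enorm_mul, Real.enorm_of_nonneg (rpow_nonneg htan p)]
  gcongr
  exact tan_half_le_self ht.1.le (ht.2.le.trans hθ)

theorem enorm_inv_sin_mul_cot_half_rpow_mul_integral_le {ε θ : ℝ} (hε : 0 < ε) (hθ : 0 < θ)
    (hθ' : θ ≤ π / 2) (f : ℝ → ℝ) :
    ‖-(1 / (ε * sin θ)) * (tan (θ / 2))⁻¹ ^ (1 / ε) * ∫ t in Ioo 0 θ, f t * tan (t / 2) ^ (1 / ε)‖ₑ
      ≤ ENNReal.ofReal (π / (2 * ε) * 2 ^ (1 / ε)) * hardyOp (1 / ε) (‖f ·‖ₑ) θ := by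
  rw [hardyOp, enorm_mul, ← mul_assoc, ← ENNReal.ofReal_mul (by positivity),
    Real.enorm_eq_ofReal_abs]
  gcongr
  · exact abs_inv_sin_mul_cot_half_rpow_le hε hθ hθ'
  · exact enorm_integral_mul_tan_half_rpow_le (by positivity) (by linarith [pi_pos]) f

theorem eLpNorm_le_of_enorm_le_hardyOp {p δ K : ℝ} (hp : -1 / 2 < p) {f h : ℝ → ℝ}
    (hf : AEStronglyMeasurable f (volume.restrict (Ioo 0 δ)))
    (hh : ∀ θ ∈ Ioo 0 δ, ‖h θ‖ₑ ≤ ENNReal.ofReal K * hardyOp p (‖f ·‖ₑ) θ) :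
    eLpNorm h 2 (volume.restrict (Ioo 0 δ)) ≤
      ENNReal.ofReal K * ENNReal.ofReal ((p + 1 / 2)⁻¹) *
        eLpNorm f 2 (volume.restrict (Ioo 0 δ)) := by
  rw [← ENNReal.pow_le_pow_left_iff two_ne_zero, mul_pow, mul_pow, sq_eLpNorm_two, sq_eLpNorm_two,
    mul_assoc]
  calc ∫⁻ θ in Ioo 0 δ, ‖h θ‖ₑ ^ 2
      ≤ ∫⁻ θ in Ioo 0 δ, ENNReal.ofReal K ^ 2 * hardyOp p (‖f ·‖ₑ) θ ^ 2 :=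
        setLIntegral_mono' measurableSet_Ioo fun θ hθ => by rw [← mul_pow]; gcongr; exact hh θ hθ
    _ ≤ _ := by
        rw [lintegral_const_mul' _ _ (by finiteness)]
        gcongr
        exact lintegral_Ioo_hardy hp hf.enorm

theorem aestronglyMeasurable_inv_sin_mul_cot_half_rpow_mul_integral {ε δ : ℝ} (hδ : δ ≤ π)
    {f : ℝ → ℝ} (hf : AEStronglyMeasurable f (volume.restrict (Ioo 0 π))) :
    AEStronglyMeasurable (fun θ => -(1 / (ε * sin θ)) * (tan (θ / 2))⁻¹ ^ (1 / ε) *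
      ∫ t in Ioo 0 θ, f t * tan (t / 2) ^ (1 / ε)) (volume.restrict (Ioo 0 δ)) := by
  have weight : Measurable fun t => tan (t / 2) ^ (1 / ε) := by fun_prop
  have prefactor : Measurable fun θ => -(1 / (ε * sin θ)) * (tan (θ / 2))⁻¹ ^ (1 / ε) := by
    fun_prop
  have primitive := aestronglyMeasurable_setIntegral_Ioo (hf.mul weight.aestronglyMeasurable)
  exact prefactor.aestronglyMeasurable.mul
    (primitive.mono_set fun θ hθ => mem_Iic.2 (hθ.2.le.trans hδ))

/-- For `ε ∈ (0,2)` and small `δ > 0` there is a constant `K`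
(depending only on `ε` and `δ`) such that for every `f ∈ L²(0,π)` the function
`h'(θ) = -(1/(ε sin θ)) (cot(θ/2))^(1/ε) ∫₀^θ f(t) (tan(t/2))^(1/ε) dt`
belongs to `L²(0,δ)` with `‖h'‖_{L²(0,δ)} ≤ K ‖f‖_{L²(0,π)}`. -/
theorem stmt3 (ε : ℝ) (hε : ε ∈ Set.Ioo (0:ℝ) 2) (δ : ℝ) (hδ : δ ∈ Set.Ioo (0:ℝ) (π/2)) :
    ∃ K : ℝ, 0 < K ∧
      ∀ f : ℝ → ℝ, MemLp f 2 (volume.restrict (Ioo 0 π)) →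
        ∀ h' : ℝ → ℝ,
          (∀ θ ∈ Ioo (0:ℝ) δ,
            h' θ = -(1 / (ε * Real.sin θ)) * ((Real.tan (θ/2))⁻¹ ^ (1/ε)) *
              (∫ t in Ioo 0 θ, f t * (Real.tan (t/2)) ^ (1/ε))) →
          MemLp h' 2 (volume.restrict (Ioo 0 δ)) ∧
          (eLpNorm h' 2 (volume.restrict (Ioo 0 δ))).toReal ≤
            K * (eLpNorm f 2 (volume.restrict (Ioo 0 π))).toReal := by
  obtain ⟨hε, -⟩ := hε
  obtain ⟨-, hδ⟩ := hδ
  set K₀ := π / (2 * ε) * 2 ^ (1 / ε)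
  set c := (1 / ε + 1 / 2)⁻¹
  refine ⟨K₀ * c, by positivity, fun f hf h' hh' => ?_⟩
  have hδπ : Ioo 0 δ ⊆ Ioo 0 π := Ioo_subset_Ioo_right (by linarith [pi_pos])
  have measurable : AEStronglyMeasurable h' (volume.restrict (Ioo 0 δ)) :=
    (aestronglyMeasurable_inv_sin_mul_cot_half_rpow_mul_integral (by linarith [pi_pos])
      hf.aestronglyMeasurable).congr
      ((ae_restrict_iff' measurableSet_Ioo).2 (ae_of_all _ fun θ hθ => (hh' θ hθ).symm))
  have bound : eLpNorm h' 2 (volume.restrict (Ioo 0 δ)) ≤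
      ENNReal.ofReal (K₀ * c) * eLpNorm f 2 (volume.restrict (Ioo 0 π)) := by
    rw [ENNReal.ofReal_mul (by positivity)]
    grw [eLpNorm_le_of_enorm_le_hardyOp (by have := one_div_pos.2 hε; linarith)
      (hf.aestronglyMeasurable.mono_measure (Measure.restrict_mono hδπ le_rfl))
      fun θ hθ => (hh' θ hθ).symm ▸
        enorm_inv_sin_mul_cot_half_rpow_mul_integral_le hε hθ.1 (by linarith [hθ.2]) f,
      eLpNorm_mono_measure f (Measure.restrict_mono hδπ le_rfl)]
  have finite : ENNReal.ofReal (K₀ * c) * eLpNorm f 2 (volume.restrict (Ioo 0 π)) ≠ ⊤ :=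
    ENNReal.mul_ne_top ENNReal.ofReal_ne_top hf.eLpNorm_ne_top
  refine ⟨⟨measurable, bound.trans_lt finite.lt_top⟩, ?_⟩
  simpa [ENNReal.toReal_mul, ENNReal.toReal_ofReal (by positivity : 0 ≤ K₀ * c)]
    using ENNReal.toReal_mono finite bound
end

section
/- Let ε ∈ (0,2) and suppose h: (0,π) → ℂ satisfies h(θ) = (cot(θ/2))^{1/ε}(k₂ - ∫_{π/2}^θ f(t)(tan(t/2))^{1/ε} dt) + ∫₀^θ f(t) dt + k₁ with f ∈ L²(0,π). If C₁ := lim_{θ→0⁺}(k₂ - ∫_{π/2}^θ f(t)(tan(t/2))^{1/ε} dt) is nonzero, then h ∉ L²(0,π). -/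
/-! Near `0`, `cot (θ / 2) ∼ 2 / θ`, the bracket tends to `C₁` and the primitive of `f` tends
to `0`, so `θ ^ (1 / ε) * h θ → 2 ^ (1 / ε) * C₁ ≠ 0`. Hence `h θ ^ 2 ≳ θ ^ (-2 / ε)` near `0`,
which is not integrable since `2 / ε > 1`. -/

open MeasureTheory Set Real Filter Topology

theorem tendsto_mul_inv_tan_half : Tendsto (fun θ => θ * (tan (θ / 2))⁻¹) (𝓝[≠] 0) (𝓝 2) := by
  have hslope : Tendsto (fun t => t⁻¹ * tan t) (𝓝[≠] 0) (𝓝 1) := by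
    simpa using (hasDerivAt_tan (x := 0) (by simp)).tendsto_slope_zero
  have hhalf : Tendsto (fun θ : ℝ => θ / 2) (𝓝[≠] 0) (𝓝[≠] 0) :=
    tendsto_nhdsWithin_of_tendsto_nhds_of_eventually_within _
      (((continuous_id.div_const (2 : ℝ)).tendsto' 0 0 (by simp)).mono_left nhdsWithin_le_nhds)
      (eventually_nhdsWithin_of_forall fun θ hθ => div_ne_zero hθ two_ne_zero)
  convert ((hslope.comp hhalf).inv₀ one_ne_zero).const_mul 2 using 2 with θ
  · simp only [Function.comp_apply, mul_inv, inv_inv]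
    ring
  · norm_num

theorem tendsto_intervalIntegral_nhdsGT {f : ℝ → ℝ} {a b : ℝ} (hab : a < b)
    (hf : IntegrableOn f (Ioo a b)) :
    Tendsto (fun x => ∫ t in a..x, f t) (𝓝[>] a) (𝓝 0) := by
  have hcont := intervalIntegral.continuousOn_primitive_interval (f := f) (μ := volume)
    (by rwa [uIcc_of_le hab.le, integrableOn_Icc_iff_integrableOn_Ioo])
    a (left_mem_uIcc (a := a) (b := b))
  rw [uIcc_of_le hab.le] at hcont
  simpa using (hcont.mono_of_mem_nhdsWithin (Icc_mem_nhdsGT hab)).tendsto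

theorem not_integrableOn_Ioo_of_const_mul_rpow_le {g : ℝ → ℝ} {c r δ : ℝ} (hc : 0 < c)
    (hr : r ≤ -1) (hδ : 0 < δ) (hle : ∀ θ ∈ Ioo 0 δ, c * θ ^ r ≤ g θ) :
    ¬ IntegrableOn g (Ioo 0 δ) := by
  intro hg
  have hrpow : IntegrableOn (fun θ => θ ^ r) (Ioo 0 δ) := by
    refine (hg.const_mul c⁻¹).mono' ?_ ?_
    · exact (continuousOn_id.rpow_const fun θ hθ => Or.inl hθ.1.ne').aestronglyMeasurable
        measurableSet_Ioo
    · refine (ae_restrict_iff' measurableSet_Ioo).2 (Eventually.of_forall fun θ hθ => ?_)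
      rw [norm_of_nonneg (rpow_nonneg hθ.1.le r), le_inv_mul_iff₀ hc]
      exact hle θ hθ
  rw [intervalIntegral.integrableOn_Ioo_rpow_iff hδ] at hrpow
  linarith

theorem not_memLp_two_of_tendsto_rpow_mul {h : ℝ → ℝ} {a s L : ℝ} (ha : 0 < a) (hs : 1 / 2 ≤ s)
    (hL : L ≠ 0) (hlim : Tendsto (fun θ => θ ^ s * h θ) (𝓝[>] 0) (𝓝 L)) :
    ¬ MemLp h 2 (volume.restrict (Ioo 0 a)) := by
  intro hmem
  obtain ⟨u, hu, hbound⟩ := mem_nhdsGT_iff_exists_Ioo_subset.1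
    (hlim.abs.eventually_const_lt (half_lt_self (abs_pos.2 hL)))
  have hδ : 0 < min u a := lt_min hu ha
  have hsq : IntegrableOn (fun θ => h θ ^ 2) (Ioo 0 (min u a)) :=
    IntegrableOn.mono_set ((memLp_two_iff_integrable_sq hmem.1).1 hmem)
      (Ioo_subset_Ioo_right (min_le_right _ _))
  refine not_integrableOn_Ioo_of_const_mul_rpow_le (c := (|L| / 2) ^ 2) (r := -(2 * s))
    (by positivity) (by linarith) hδ (fun θ hθ => ?_) hsq
  have hθL : |L| / 2 < |θ ^ s * h θ| := hbound ⟨hθ.1, hθ.2.trans_le (min_le_left _ _)⟩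
  have hpos : 0 < θ ^ (2 * s) := rpow_pos_of_pos hθ.1 _
  have hsq_eq : (θ ^ s * h θ) ^ 2 = θ ^ (2 * s) * h θ ^ 2 := by
    rw [mul_pow, ← rpow_natCast, ← rpow_mul hθ.1.le]
    norm_num [mul_comm]
  rw [rpow_neg hθ.1.le, ← div_eq_mul_inv, div_le_iff₀ hpos, mul_comm (h θ ^ 2), ← hsq_eq]
  exact (pow_le_pow_left₀ (by positivity) hθL.le 2).trans_eq (sq_abs _)

/-- Let `ε ∈ (0,2)`, `f ∈ L²(0,π)` and suppose
`h(θ) = (cot(θ/2))^(1/ε) (k₂ - ∫_{π/2}^θ f (tan(t/2))^(1/ε) dt) + ∫₀^θ f + k₁` on `(0,π)`.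
If `C₁ = lim_{θ→0⁺} (k₂ - ∫_{π/2}^θ f (tan(t/2))^(1/ε) dt)` is nonzero, then `h ∉ L²(0,π)`. -/
theorem stmt4 (ε : ℝ) (hε : ε ∈ Set.Ioo (0:ℝ) 2)
    (f : ℝ → ℝ) (hf : MemLp f 2 (volume.restrict (Ioo 0 π)))
    (k₁ k₂ C₁ : ℝ) (h : ℝ → ℝ)
    (hh : ∀ θ ∈ Ioo (0:ℝ) π,
      h θ = ((Real.tan (θ/2))⁻¹ ^ (1/ε)) *
              (k₂ - ∫ t in (π/2)..θ, f t * (Real.tan (t/2)) ^ (1/ε))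
            + (∫ t in (0:ℝ)..θ, f t) + k₁)
    (hC₁ : Tendsto (fun θ => k₂ - ∫ t in (π/2)..θ, f t * (Real.tan (t/2)) ^ (1/ε))
            (nhdsWithin 0 (Ioi 0)) (nhds C₁))
    (hC₁0 : C₁ ≠ 0) :
    ¬ MemLp h 2 (volume.restrict (Ioo 0 π)) := by
  have hs : 1 / 2 ≤ 1 / ε := one_div_le_one_div_of_le hε.1 hε.2.le
  have hs0 : 0 < 1 / ε := one_div_pos.2 hε.1
  have hcot : Tendsto (fun θ => θ ^ (1 / ε) * (tan (θ / 2))⁻¹ ^ (1 / ε)) (𝓝[>] 0)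
      (𝓝 (2 ^ (1 / ε))) := by
    refine ((tendsto_mul_inv_tan_half.mono_left (nhdsGT_le_nhdsNE 0)).rpow_const
      (Or.inr hs0.le)).congr' ?_
    filter_upwards [Ioo_mem_nhdsGT pi_pos] with θ hθ
    have htan : 0 < tan (θ / 2) := tan_pos_of_pos_of_lt_pi_div_two (by linarith [hθ.1])
      (by linarith [hθ.2])
    rw [mul_rpow hθ.1.le (inv_nonneg.2 htan.le)]
  have hprim : Tendsto (fun θ => θ ^ (1 / ε) * ((∫ t in (0:ℝ)..θ, f t) + k₁)) (𝓝[>] 0) (𝓝 0) := by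
    have hpow : Tendsto (fun θ : ℝ => θ ^ (1 / ε)) (𝓝[>] 0) (𝓝 0) := by
      have hcont := (continuousAt_rpow_const 0 (1 / ε) (Or.inr hs0.le)).tendsto
      rw [zero_rpow hs0.ne'] at hcont
      exact hcont.mono_left nhdsWithin_le_nhds
    simpa using hpow.mul
      ((tendsto_intervalIntegral_nhdsGT pi_pos (hf.integrable one_le_two)).add_const k₁)
  have hlim : Tendsto (fun θ => θ ^ (1 / ε) * h θ) (𝓝[>] 0) (𝓝 (2 ^ (1 / ε) * C₁)) := by
    refine (add_zero (2 ^ (1 / ε) * C₁) ▸ (hcot.mul hC₁).add hprim).congr' ?_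
    filter_upwards [Ioo_mem_nhdsGT pi_pos] with θ hθ
    rw [hh θ hθ]
    ring
  exact not_memLp_two_of_tendsto_rpow_mul pi_pos hs
    (mul_ne_zero (rpow_pos_of_pos two_pos _).ne' hC₁0) hlim
end

section
/- Let ε ∈ (0,2), f ∈ L²(-π,π) with ∫_{-π}^π f = 0, and let h(θ) = -|cot(θ/2)|^{1/ε} ∫₀^θ f(t)|tan(t/2)|^{1/ε} dt + ∫₀^θ f(t) dt + k₁ on (-π,0)∪(0,π). Then lim_{θ→0⁺} h(θ) = lim_{θ→0⁻} h(θ) = k₁, lim_{θ→π⁻} h(θ) = k₁ + ∫₀^π f(t) dt, and lim_{θ→-π⁺} h(θ) = k₁ + ∫₀^{-π} f(t) dt; consequently h extends to a continuous periodic function on [-π,π] (h(π) = h(-π)) precisely because ∫_{-π}^π f = 0. -/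
/-! The weight `w t = |tan (t/2)| ^ (1/ε)` is even, increasing on `(0, π)` and tends to `∞`
at `π`. So `(w θ)⁻¹ ∫₀^θ f w` is the integral of `f` against `1_{[0,θ]} w / w θ ≤ 1`, which
tends to `0` pointwise both as `θ → 0⁺` (the interval shrinks) and as `θ → π⁻` (`w θ → ∞`);
by dominated convergence with `|f|` this term vanishes in both limits, leaving the continuous
primitive `∫₀^θ f`. The reflection `t ↦ -t` turns the side `θ < 0` into the side `θ > 0` for
`-f (-t)`, and `∫_{-π}^π f = 0` says exactly that `∫₀^π f = ∫₀^{-π} f`. -/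

open MeasureTheory Set Real Filter Topology

section WeightedMean

variable {w f : ℝ → ℝ} {b : ℝ}

theorem tendsto_inv_mul_integral_mul_of_monotoneOn (hb : 0 < b) (hw : MonotoneOn w (Ioo 0 b))
    (hw₀ : ∀ t ∈ Ioo 0 b, 0 < w t) (hwm : Measurable w) (hf : IntervalIntegrable f volume 0 b)
    {l : Filter ℝ} [l.IsCountablyGenerated] (hl : ∀ᶠ θ in l, θ ∈ Ioo 0 b)
    (hlim : ∀ t ∈ Ioc 0 b,
      Tendsto (fun θ => (Iic θ).indicator (fun s => f s * (w s / w θ)) t) l (𝓝 0)) :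
    Tendsto (fun θ => (w θ)⁻¹ * ∫ t in 0..θ, f t * w t) l (𝓝 0) := by
  have hbound : ∀ θ ∈ Ioo 0 b, ∀ t ∈ Ioc 0 b,
      ‖(Iic θ).indicator (fun s => f s * (w s / w θ)) t‖ ≤ |f t| := by
    intro θ hθ t ht
    by_cases htθ : t ∈ Iic θ
    · have ht' : t ∈ Ioo 0 b := ⟨ht.1, htθ.trans_lt hθ.2⟩
      have hle : w t / w θ ≤ 1 := (div_le_one (hw₀ θ hθ)).2 (hw ht' hθ htθ)
      rw [indicator_of_mem htθ, norm_mul,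
        Real.norm_of_nonneg (div_nonneg (hw₀ t ht').le (hw₀ θ hθ).le)]
      exact mul_le_of_le_one_right (abs_nonneg _) hle
    · rw [indicator_of_notMem htθ, norm_zero]
      exact abs_nonneg _
  have hDCT := intervalIntegral.tendsto_integral_filter_of_dominated_convergence (μ := volume)
    (F := fun θ => (Iic θ).indicator (fun s => f s * (w s / w θ))) (f := fun _ => 0) (l := l)
    (fun t => |f t|)
    (Eventually.of_forall fun θ =>
      (hf.def'.aestronglyMeasurable.mul (hwm.div_const _).aestronglyMeasurable).indicator
        measurableSet_Iic)
    (hl.mono fun θ hθ => ae_of_all _ fun t ht => hbound θ hθ t (by rwa [uIoc_of_le hb.le] at ht))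
    hf.abs
    (ae_of_all _ fun t ht => hlim t (by rwa [uIoc_of_le hb.le] at ht))
  rw [intervalIntegral.integral_zero] at hDCT
  refine hDCT.congr' ?_
  filter_upwards [hl] with θ hθ
  rw [intervalIntegral.integral_of_le hb.le, intervalIntegral.integral_of_le hθ.1.le,
    setIntegral_indicator measurableSet_Iic, Ioc_inter_Iic, min_eq_right hθ.2.le,
    inv_mul_eq_div, ← integral_div]
  simp_rw [mul_div_assoc]

theorem tendsto_inv_mul_integral_mul_nhdsGT_zero (hb : 0 < b) (hw : MonotoneOn w (Ioo 0 b))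
    (hw₀ : ∀ t ∈ Ioo 0 b, 0 < w t) (hwm : Measurable w) (hf : IntervalIntegrable f volume 0 b) :
    Tendsto (fun θ => (w θ)⁻¹ * ∫ t in 0..θ, f t * w t) (𝓝[>] 0) (𝓝 0) := by
  refine tendsto_inv_mul_integral_mul_of_monotoneOn hb hw hw₀ hwm hf (Ioo_mem_nhdsGT hb)
    fun t ht => tendsto_const_nhds.congr' ?_
  filter_upwards [Ioo_mem_nhdsGT ht.1] with θ hθ
  exact (indicator_of_notMem (show t ∉ Iic θ from not_le.2 hθ.2) _).symm

theorem tendsto_inv_mul_integral_mul_nhdsLT (hb : 0 < b) (hw : MonotoneOn w (Ioo 0 b))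
    (hw₀ : ∀ t ∈ Ioo 0 b, 0 < w t) (hwm : Measurable w) (hw_top : Tendsto w (𝓝[<] b) atTop)
    (hf : IntervalIntegrable f volume 0 b) :
    Tendsto (fun θ => (w θ)⁻¹ * ∫ t in 0..θ, f t * w t) (𝓝[<] b) (𝓝 0) := by
  refine tendsto_inv_mul_integral_mul_of_monotoneOn hb hw hw₀ hwm hf (Ioo_mem_nhdsLT hb)
    fun t _ => ?_
  have hdecay : Tendsto (fun θ => ‖f t * w t‖ / ‖w θ‖) (𝓝[<] b) (𝓝 0) :=
    tendsto_const_nhds.div_atTop (tendsto_norm_atTop_atTop.comp hw_top)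
  refine squeeze_zero_norm (fun θ => ?_) hdecay
  refine (norm_indicator_le_norm_self _ _).trans_eq ?_
  rw [← norm_div, mul_div_assoc]

end WeightedMean

section TanWeight

variable {p t : ℝ}

theorem tan_half_pos (ht : t ∈ Ioo 0 π) : 0 < tan (t / 2) :=
  tan_pos_of_pos_of_lt_pi_div_two (by linarith [ht.1]) (by linarith [ht.2])

theorem abs_tan_half_rpow_pos (ht : t ∈ Ioo 0 π) : 0 < |tan (t / 2)| ^ p :=
  rpow_pos_of_pos (abs_pos.2 (tan_half_pos ht).ne') p

theorem monotoneOn_abs_tan_half_rpow (hp : 0 ≤ p) :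
    MonotoneOn (fun t => |tan (t / 2)| ^ p) (Ioo 0 π) := by
  intro s hs t ht hst
  have hmem : ∀ x ∈ Ioo 0 π, x / 2 ∈ Ioo (-(π / 2)) (π / 2) := fun x hx =>
    ⟨by linarith [hx.1, pi_pos], by linarith [hx.2]⟩
  have hle : tan (s / 2) ≤ tan (t / 2) :=
    strictMonoOn_tan.monotoneOn (hmem s hs) (hmem t ht) (by linarith)
  refine rpow_le_rpow (abs_nonneg _) ?_ hp
  rwa [abs_of_pos (tan_half_pos hs), abs_of_pos (tan_half_pos ht)]

theorem measurable_abs_tan_half_rpow : Measurable fun t => |tan (t / 2)| ^ p := by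
  simp only [tan_eq_sin_div_cos]
  fun_prop

theorem tendsto_abs_tan_half_rpow_nhdsLT_pi (hp : 0 < p) :
    Tendsto (fun t => |tan (t / 2)| ^ p) (𝓝[<] π) atTop := by
  have hhalf : Tendsto (fun t : ℝ => t / 2) (𝓝[<] π) (𝓝[<] (π / 2)) := by
    refine tendsto_nhdsWithin_of_tendsto_nhds_of_eventually_within _
      ((continuous_id.div_const 2).tendsto' π _ rfl |>.mono_left nhdsWithin_le_nhds) ?_
    filter_upwards [self_mem_nhdsWithin] with t (ht : t < π)
    exact div_lt_div_of_pos_right ht two_pos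
  exact (tendsto_rpow_atTop hp).comp
    (tendsto_abs_atTop_atTop.comp (tendsto_tan_pi_div_two.comp hhalf))

end TanWeight

section TanWeightedPrimitive

variable {p : ℝ} {f : ℝ → ℝ}

/-- The paper's `h - k₁`, with `|cot (θ/2)|` written as `|tan (θ/2)|⁻¹`. -/
noncomputable def tanWeightedPrimitive (p : ℝ) (f : ℝ → ℝ) (θ : ℝ) : ℝ :=
  -(|tan (θ / 2)|⁻¹ ^ p) * (∫ t in (0:ℝ)..θ, f t * |tan (t / 2)| ^ p) + ∫ t in (0:ℝ)..θ, f t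

theorem tanWeightedPrimitive_eq :
    tanWeightedPrimitive p f = fun θ => -((|tan (θ / 2)| ^ p)⁻¹ *
      ∫ t in (0:ℝ)..θ, f t * |tan (t / 2)| ^ p) + ∫ t in (0:ℝ)..θ, f t := by
  ext θ
  rw [tanWeightedPrimitive, inv_rpow (abs_nonneg _), neg_mul]

theorem continuousOn_primitive_Icc_zero {b : ℝ} (hb : 0 ≤ b)
    (hf : IntervalIntegrable f volume 0 b) :
    ContinuousOn (fun θ => ∫ t in (0:ℝ)..θ, f t) (Icc 0 b) := by
  simpa [uIcc_of_le hb] using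
    intervalIntegral.continuousOn_primitive_interval' hf left_mem_uIcc

theorem integral_zero_to_neg (g : ℝ → ℝ) (θ : ℝ) :
    ∫ t in (0:ℝ)..-θ, g t = ∫ t in (0:ℝ)..θ, -g (-t) := by
  rw [intervalIntegral.integral_neg, intervalIntegral.integral_comp_neg g, neg_zero,
    intervalIntegral.integral_symm]

theorem tanWeightedPrimitive_neg (θ : ℝ) :
    tanWeightedPrimitive p f (-θ) = tanWeightedPrimitive p (fun s => -f (-s)) θ := by
  have hw : ∀ s : ℝ, |tan (-s / 2)| = |tan (s / 2)| := fun s => by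
    rw [neg_div, tan_neg, abs_neg]
  simp only [tanWeightedPrimitive, hw, integral_zero_to_neg (fun t => f t * |tan (t / 2)| ^ p),
    integral_zero_to_neg f, neg_mul]

theorem tendsto_tanWeightedPrimitive_nhdsGT_zero (hp : 0 < p)
    (hf : IntervalIntegrable f volume 0 π) :
    Tendsto (tanWeightedPrimitive p f) (𝓝[>] 0) (𝓝 0) := by
  have hweighted := tendsto_inv_mul_integral_mul_nhdsGT_zero pi_pos
    (monotoneOn_abs_tan_half_rpow hp.le) (fun _ => abs_tan_half_rpow_pos)
    measurable_abs_tan_half_rpow hf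
  have hprimitive : Tendsto (fun θ => ∫ t in (0:ℝ)..θ, f t) (𝓝[>] 0) (𝓝 0) := by
    simpa using ((continuousOn_primitive_Icc_zero pi_pos.le hf 0
      (left_mem_Icc.2 pi_pos.le)).mono_of_mem_nhdsWithin (Icc_mem_nhdsGT pi_pos)).tendsto
  rw [tanWeightedPrimitive_eq]
  simpa using hweighted.neg.add hprimitive

theorem tendsto_tanWeightedPrimitive_nhdsLT_pi (hp : 0 < p)
    (hf : IntervalIntegrable f volume 0 π) :
    Tendsto (tanWeightedPrimitive p f) (𝓝[<] π) (𝓝 (∫ t in (0:ℝ)..π, f t)) := by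
  have hweighted := tendsto_inv_mul_integral_mul_nhdsLT pi_pos
    (monotoneOn_abs_tan_half_rpow hp.le) (fun _ => abs_tan_half_rpow_pos)
    measurable_abs_tan_half_rpow (tendsto_abs_tan_half_rpow_nhdsLT_pi hp) hf
  have hprimitive := ((continuousOn_primitive_Icc_zero pi_pos.le hf π
    (right_mem_Icc.2 pi_pos.le)).mono_of_mem_nhdsWithin (Icc_mem_nhdsLT pi_pos)).tendsto
  rw [tanWeightedPrimitive_eq]
  simpa using hweighted.neg.add hprimitive

theorem tendsto_of_eqOn_tanWeightedPrimitive (hp : 0 < p) (hf : IntervalIntegrable f volume 0 π)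
    {h : ℝ → ℝ} {k : ℝ} (hh : ∀ θ ∈ Ioo 0 π, h θ = tanWeightedPrimitive p f θ + k) :
    Tendsto h (𝓝[>] 0) (𝓝 k) ∧ Tendsto h (𝓝[<] π) (𝓝 (k + ∫ t in (0:ℝ)..π, f t)) := by
  have heq : ∀ {l : Filter ℝ}, Ioo 0 π ∈ l →
      (fun θ => tanWeightedPrimitive p f θ + k) =ᶠ[l] h :=
    fun hl => eventually_of_mem hl fun θ hθ => (hh θ hθ).symm
  constructor
  · simpa using ((tendsto_tanWeightedPrimitive_nhdsGT_zero hp hf).add_const k).congr'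
      (heq (Ioo_mem_nhdsGT pi_pos))
  · rw [add_comm]
    exact ((tendsto_tanWeightedPrimitive_nhdsLT_pi hp hf).add_const k).congr'
      (heq (Ioo_mem_nhdsLT pi_pos))

end TanWeightedPrimitive

theorem stmt16_general (ε : ℝ) (hε : ε ∈ Set.Ioo (0:ℝ) 2)
    (f : ℝ → ℝ)
    (hf1 : IntegrableOn f (Ioo (-π) π))
    (hf0 : ∫ t in Ioo (-π) π, f t = 0)
    (k₁ : ℝ) (h : ℝ → ℝ)
    (hh : ∀ θ ∈ Ioo (-π) π, θ ≠ 0 →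
      h θ = -(|Real.tan (θ/2)|⁻¹ ^ (1/ε)) *
              (∫ t in (0:ℝ)..θ, f t * |Real.tan (t/2)| ^ (1/ε))
            + (∫ t in (0:ℝ)..θ, f t) + k₁) :
    Tendsto h (nhdsWithin 0 (Ioi 0)) (nhds k₁) ∧
    Tendsto h (nhdsWithin 0 (Iio 0)) (nhds k₁) ∧
    Tendsto h (nhdsWithin π (Iio π)) (nhds (k₁ + ∫ t in (0:ℝ)..π, f t)) ∧
    Tendsto h (nhdsWithin (-π) (Ioi (-π))) (nhds (k₁ + ∫ t in (0:ℝ)..(-π), f t)) ∧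
    k₁ + (∫ t in (0:ℝ)..π, f t) = k₁ + ∫ t in (0:ℝ)..(-π), f t := by
  have hp : 0 < 1 / ε := one_div_pos.2 hε.1
  have hπ := pi_pos
  have hfneg : IntervalIntegrable f volume (-π) 0 := (intervalIntegrable_iff_integrableOn_Ioo_of_le
    (by linarith)).2 (hf1.mono_set (Ioo_subset_Ioo_right hπ.le))
  have hfpos : IntervalIntegrable f volume 0 π := (intervalIntegrable_iff_integrableOn_Ioo_of_le
    hπ.le).2 (hf1.mono_set (Ioo_subset_Ioo_left (by linarith)))
  have hfrefl : IntervalIntegrable (fun s => -f (-s)) volume 0 π := by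
    have := ((IntervalIntegrable.iff_comp_neg).1 hfneg.symm).neg
    rwa [neg_zero, neg_neg] at this
  obtain ⟨hzero_right, hpi_left⟩ := tendsto_of_eqOn_tanWeightedPrimitive hp hfpos
    fun θ hθ => hh θ ⟨by linarith [hθ.1], hθ.2⟩ hθ.1.ne'
  obtain ⟨hzero_left, hpi_right⟩ := tendsto_of_eqOn_tanWeightedPrimitive (h := fun θ => h (-θ))
    hp hfrefl fun θ hθ => by
      rw [← tanWeightedPrimitive_neg]
      exact hh (-θ) ⟨by linarith [hθ.2], by linarith [hθ.1]⟩ (neg_ne_zero.2 hθ.1.ne')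
  have hsplit := intervalIntegral.integral_add_adjacent_intervals hfneg hfpos
  rw [intervalIntegral.integral_symm 0 (-π),
    intervalIntegral.integral_of_le (by linarith : -π ≤ π), integral_Ioc_eq_integral_Ioo, hf0]
    at hsplit
  refine ⟨hzero_right, ?_, hpi_left, ?_, by linarith⟩
  · simpa [Function.comp_def] using hzero_left.comp (tendsto_neg_nhdsLT_neg (a := 0))
  · rw [integral_zero_to_neg]
    simpa [Function.comp_def] using hpi_right.comp tendsto_neg_nhdsGT_neg

/-- for `ε ∈ (0,2)`, `f ∈ L²(-π,π)` with `∫_{-π}^π f = 0`, and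
`h(θ) = -|cot(θ/2)|^(1/ε) ∫₀^θ f(t) |tan(t/2)|^(1/ε) dt + ∫₀^θ f + k₁` on
`(-π,0) ∪ (0,π)`, the function `h` has limits `k₁` at `0±`, `k₁ + ∫₀^π f` at `π⁻`,
`k₁ + ∫₀^{-π} f` at `-π⁺`, and the two boundary limits agree (so `h` extends to a
continuous periodic function) precisely because `∫_{-π}^π f = 0`. -/
theorem stmt16 (ε : ℝ) (hε : ε ∈ Set.Ioo (0:ℝ) 2)
    (f : ℝ → ℝ) (hf : MemLp f 2 (volume.restrict (Ioo (-π) π)))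
    (hf1 : IntegrableOn f (Ioo (-π) π))
    (hf0 : ∫ t in Ioo (-π) π, f t = 0)
    (k₁ : ℝ) (h : ℝ → ℝ)
    (hh : ∀ θ ∈ Ioo (-π) π, θ ≠ 0 →
      h θ = -(|Real.tan (θ/2)|⁻¹ ^ (1/ε)) *
              (∫ t in (0:ℝ)..θ, f t * |Real.tan (t/2)| ^ (1/ε))
            + (∫ t in (0:ℝ)..θ, f t) + k₁) :
    Tendsto h (nhdsWithin 0 (Ioi 0)) (nhds k₁) ∧
    Tendsto h (nhdsWithin 0 (Iio 0)) (nhds k₁) ∧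
    Tendsto h (nhdsWithin π (Iio π)) (nhds (k₁ + ∫ t in (0:ℝ)..π, f t)) ∧
    Tendsto h (nhdsWithin (-π) (Ioi (-π))) (nhds (k₁ + ∫ t in (0:ℝ)..(-π), f t)) ∧
    k₁ + (∫ t in (0:ℝ)..π, f t) = k₁ + ∫ t in (0:ℝ)..(-π), f t :=
  stmt16_general ε hε f hf1 hf0 k₁ h hh
end
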